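/- Let X = M₀ ⊕ M_∞ be a Banach space decomposed as a topological direct sum and U : M₀ → M_∞ an invertible bounded operator. Set M_ω = {x₀ + ωUx₀ : x₀ ∈ M₀} for ω ∈ ℂ and let 𝔗 = {{0}, M₀, M₁, M_∞, X} be the resulting double triangle subspace lattice. Then Lat(Alg(𝔗)) = {M_ω : ω ∈ ℂ} ∪ {M_∞} ∪ {{0}, X}; in particular 𝔗 is not reflexive, and hence no double triangle subspace lattice in a finite-dimensional Banach space is reflexive. -/

import Mathlib

open ContinuousLinearMap

/-- The closed linear span (join) of a family of subspaces. -/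
noncomputable def cJoin {X : Type*} [NormedAddCommGroup X] [NormedSpace ℂ X]
    (S : Set (Submodule ℂ X)) : Submodule ℂ X :=
  (sSup S).topologicalClosure

/-- Join of two subspaces in the lattice of closed subspaces. -/
noncomputable def cJoin2 {X : Type*} [NormedAddCommGroup X] [NormedSpace ℂ X]
    (M N : Submodule ℂ X) : Submodule ℂ X :=
  (M ⊔ N).topologicalClosure

/-- A subspace lattice: a complete lattice of closed subspaces containing the trivial ones. -/
def IsSubspaceLattice {X : Type*} [NormedAddCommGroup X] [NormedSpace ℂ X]
    (L : Set (Submodule ℂ X)) : Prop :=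
  (∀ M ∈ L, IsClosed (M : Set X)) ∧ ⊥ ∈ L ∧ ⊤ ∈ L ∧
    ∀ S ⊆ L, cJoin S ∈ L ∧ sInf S ∈ L

/-- Alg(F): bounded operators leaving every member of F invariant. -/
def algOf {X : Type*} [NormedAddCommGroup X] [NormedSpace ℂ X]
    (L : Set (Submodule ℂ X)) : Set (X →L[ℂ] X) :=
  {A | ∀ M ∈ L, ∀ x ∈ M, A x ∈ M}

/-- Lat(T): closed subspaces invariant under every operator in T. -/
def latOf {X : Type*} [NormedAddCommGroup X] [NormedSpace ℂ X]
    (T : Set (X →L[ℂ] X)) : Set (Submodule ℂ X) :=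
  {M | IsClosed (M : Set X) ∧ ∀ A ∈ T, ∀ x ∈ M, A x ∈ M}

/-- The rank-one operator e ⊗ η : x ↦ η(x) • e. -/
noncomputable def rankOne {X : Type*} [NormedAddCommGroup X] [NormedSpace ℂ X]
    (e : X) (η : X →L[ℂ] ℂ) : X →L[ℂ] X :=
  η.smulRight e

/-- The rank-one operators in a set of operators. -/
noncomputable def Rk1 {X : Type*} [NormedAddCommGroup X] [NormedSpace ℂ X]
    (T : Set (X →L[ℂ] X)) : Set (X →L[ℂ] X) :=
  {A ∈ T | ∃ (e : X) (η : X →L[ℂ] ℂ), e ≠ 0 ∧ η ≠ 0 ∧ A = rankOne e η}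

/-- M₋ = ⋁{K ∈ L : M ⊄ K}. -/
noncomputable def mMinus {X : Type*} [NormedAddCommGroup X] [NormedSpace ℂ X]
    (L : Set (Submodule ℂ X)) (M : Submodule ℂ X) : Submodule ℂ X :=
  cJoin {K | K ∈ L ∧ ¬ M ≤ K}

/-- M₊ = ⋀{K ∈ L : K ⊄ M}. -/
noncomputable def mPlus {X : Type*} [NormedAddCommGroup X] [NormedSpace ℂ X]
    (L : Set (Submodule ℂ X)) (M : Submodule ℂ X) : Submodule ℂ X :=
  sInf {K | K ∈ L ∧ ¬ K ≤ M}

/-- N_* = ⋀{M₋ : M ∈ L, M ⊄ N}. -/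
noncomputable def nStar {X : Type*} [NormedAddCommGroup X] [NormedSpace ℂ X]
    (L : Set (Submodule ℂ X)) (N : Submodule ℂ X) : Submodule ℂ X :=
  sInf {P | ∃ M, M ∈ L ∧ ¬ M ≤ N ∧ P = mMinus L M}

/-- The cyclic subspace [Alg(L)x]: closed linear span of the orbit of x under Alg(L). -/
noncomputable def cyclicSubspace {X : Type*} [NormedAddCommGroup X] [NormedSpace ℂ X]
    (L : Set (Submodule ℂ X)) (x : X) : Submodule ℂ X :=
  (Submodule.span ℂ ((fun A : X →L[ℂ] X => A x) '' algOf L)).topologicalClosure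

/-- The pinch points of a family of subspaces. -/
def pinOf {X : Type*} [NormedAddCommGroup X] [NormedSpace ℂ X]
    (L : Set (Submodule ℂ X)) : Set (Submodule ℂ X) :=
  {P | P ∈ L ∧ ∀ M ∈ L, M ≤ P ∨ P ≤ M}


/-- The subspace M_ω = {x₀ + ω·U x₀ : x₀ ∈ M₀}. -/
noncomputable def Momega {X : Type*} [NormedAddCommGroup X] [NormedSpace ℂ X]
    (M₀ Minf : Submodule ℂ X) (U : M₀ ≃L[ℂ] Minf) (ω : ℂ) : Submodule ℂ X :=
  LinearMap.range
    (M₀.subtype + ω • (Minf.subtype ∘ₗ ((U : M₀ →L[ℂ] Minf) : M₀ →ₗ[ℂ] Minf)))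

/-! Writing `x = v + U w` with `v, w ∈ M₀` identifies `X` with `M₀ × M₀`. In these coordinates
`M_ω` is the graph `{(v, ω v)}`, `M_∞` is `{0} × M₀`, and `Alg 𝔗` contains every diagonal
operator `B × B` with `B ∈ B(M₀)`, while conversely every operator of `Alg 𝔗` acts on `v + U v`
as a diagonal one, so every `M_ω` is invariant. By Hahn–Banach, `B(M₀)` maps any linearly
independent pair to any pair, so an invariant subspace containing a point with independent
coordinates is `X`; otherwise each of its nonzero points spans, under `B(M₀)`, the whole line
`M_ω` (or `M_∞`) through it, and two distinct such lines already span `X`. Since `ω ↦ M_ω` is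
injective, `Lat Alg 𝔗` is infinite, so it is not `𝔗`. In finite dimensions every double
triangle `{K, L, M}` is of this form, `L` being the graph of the isomorphism `K ≃ M` obtained by
projecting `L` onto `K` and onto `M`. -/

theorem mem_Momega {X : Type*} [NormedAddCommGroup X] [NormedSpace ℂ X]
    (M₀ Minf : Submodule ℂ X) (U : M₀ ≃L[ℂ] Minf) (ω : ℂ) (x : X) :
    x ∈ Momega M₀ Minf U ω ↔ ∃ v : M₀, (v : X) + ω • ((U v : Minf) : X) = x := by
  simp [Momega, LinearMap.mem_range]

section SeparatingDual

variable {R V : Type*} [Field R] [TopologicalSpace R] [IsTopologicalRing R]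
  [AddCommGroup V] [TopologicalSpace V] [Module R V] [SeparatingDual R V]

theorem SeparatingDual.exists_apply_eq_of_linearIndependent {ι : Type*} [Fintype ι]
    {v : ι → V} (hv : LinearIndependent R v) (c : ι → R) :
    ∃ f : StrongDual R V, ∀ i, f (v i) = c i := by
  classical
  obtain ⟨f, hf⟩ := (dualMap_surjective_iff (f := Fintype.linearCombination R v)).2
    (linearIndependent_iff_injective_fintypeLinearCombination.1 hv) (Fintype.linearCombination R c)
  exact ⟨f, fun i ↦ by simpa using congr($hf (Pi.single i 1))⟩

theorem ContinuousLinearMap.exists_apply_eq_of_ne_zero [ContinuousSMul R V] {a : V}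
    (ha : a ≠ 0) (w : V) : ∃ B : V →L[R] V, B a = w := by
  obtain ⟨f, hf⟩ := SeparatingDual.exists_eq_one (R := R) ha
  exact ⟨f.smulRight w, by simp [hf]⟩

theorem ContinuousLinearMap.exists_apply_eq_of_linearIndependent [IsTopologicalAddGroup V]
    [ContinuousSMul R V] {ι : Type*} [Fintype ι] {v : ι → V} (hv : LinearIndependent R v)
    (w : ι → V) : ∃ B : V →L[R] V, ∀ i, B (v i) = w i := by
  classical
  choose f hf using fun j ↦ SeparatingDual.exists_apply_eq_of_linearIndependent hv (Pi.single j 1)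
  exact ⟨∑ j, (f j).smulRight (w j), fun i ↦ by simp [hf, Pi.single_apply]⟩

end SeparatingDual

theorem Submodule.exists_linearEquiv_range_eq {R E : Type*} [Ring R] [AddCommGroup E]
    [Module R E] {K L M : Submodule R E} (hKL : IsCompl K L) (hKM : IsCompl K M)
    (hLM : IsCompl L M) :
    ∃ U : K ≃ₗ[R] M, LinearMap.range (K.subtype + M.subtype ∘ₗ (U : K →ₗ[R] M)) = L := by
  set eK : L ≃ₗ[R] K :=
    (M.quotientEquivOfIsCompl L hLM.symm).symm.trans (M.quotientEquivOfIsCompl K hKM.symm)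
  set eM : L ≃ₗ[R] M :=
    (K.quotientEquivOfIsCompl L hKL).symm.trans (K.quotientEquivOfIsCompl M hKM)
  have hsum (l : L) : (eK l : E) + eM l = l := by
    simpa [eK, eM] using K.projection_add_projection_eq_self hKM l
  refine ⟨eK.symm.trans eM, le_antisymm ?_ fun x hx ↦ ⟨eK ⟨x, hx⟩, ?_⟩⟩
  · rintro _ ⟨k, rfl⟩
    simpa [← hsum (eK.symm k)] using (eK.symm k).2
  · simpa using hsum ⟨x, hx⟩

theorem subset_latOf_algOf {X : Type*} [NormedAddCommGroup X] [NormedSpace ℂ X]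
    {L : Set (Submodule ℂ X)} (hL : ∀ M ∈ L, IsClosed (M : Set X)) : L ⊆ latOf (algOf L) :=
  fun M hM ↦ ⟨hL M hM, fun _ hA ↦ hA M hM⟩

namespace DoubleTriangle

variable {X : Type*} [NormedAddCommGroup X] [NormedSpace ℂ X] {M₀ Minf : Submodule ℂ X}
  (U : M₀ ≃L[ℂ] Minf)

abbrev lattice : Set (Submodule ℂ X) := {⊥, M₀, Momega M₀ Minf U 1, Minf, ⊤}

/-- The subspaces `M_ω`, `ω ∈ ℂ ∪ {∞}`. -/
abbrev lines : Set (Submodule ℂ X) := {K | ∃ ω, K = Momega M₀ Minf U ω} ∪ {Minf}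

theorem Momega_zero : Momega M₀ Minf U 0 = M₀ := by
  simp [Momega]

theorem add_smul_mem_Momega (ω : ℂ) (v : M₀) :
    (v : X) + ω • ((U v : Minf) : X) ∈ Momega M₀ Minf U ω :=
  (mem_Momega _ _ _ _ _).2 ⟨v, rfl⟩

theorem le_Momega_sup_Minf (ω : ℂ) : M₀ ≤ Momega M₀ Minf U ω ⊔ Minf := fun v hv ↦ by
  simpa using Submodule.sub_mem_sup (add_smul_mem_Momega U ω ⟨v, hv⟩)
    (Minf.smul_mem ω (U ⟨v, hv⟩).2)

theorem Minf_le_Momega_sup_Momega {ω ω' : ℂ} (hne : ω ≠ ω') :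
    Minf ≤ Momega M₀ Minf U ω ⊔ Momega M₀ Minf U ω' := by
  intro z hz
  set v : M₀ := (ω - ω')⁻¹ • U.symm ⟨z, hz⟩
  have := Submodule.sub_mem_sup (add_smul_mem_Momega U ω v) (add_smul_mem_Momega U ω' v)
  rwa [add_sub_add_left_eq_sub, ← sub_smul, map_smul, Submodule.coe_smul, smul_smul,
    mul_inv_cancel₀ (sub_ne_zero.2 hne), one_smul, ContinuousLinearEquiv.apply_symm_apply] at this

theorem Momega_sup_Minf (hsum : M₀ ⊔ Minf = ⊤) (ω : ℂ) : Momega M₀ Minf U ω ⊔ Minf = ⊤ :=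
  top_unique (hsum ▸ sup_le (le_Momega_sup_Minf U ω) le_sup_right)

theorem Momega_sup_Momega (hsum : M₀ ⊔ Minf = ⊤) {ω ω' : ℂ} (hne : ω ≠ ω') :
    Momega M₀ Minf U ω ⊔ Momega M₀ Minf U ω' = ⊤ :=
  top_unique <| Momega_sup_Minf U hsum ω ▸ sup_le le_sup_left (Minf_le_Momega_sup_Momega U hne)

theorem sup_eq_top_of_ne (hsum : M₀ ⊔ Minf = ⊤) {K K' : Submodule ℂ X} (hK : K ∈ lines U)
    (hK' : K' ∈ lines U) (hne : K ≠ K') : K ⊔ K' = ⊤ := by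
  rcases hK with ⟨ω, rfl⟩ | rfl <;> rcases hK' with ⟨ω', rfl⟩ | rfl
  · exact Momega_sup_Momega U hsum fun h ↦ hne (h ▸ rfl)
  · exact Momega_sup_Minf U hsum ω
  · rw [sup_comm]
    exact Momega_sup_Minf U hsum ω'
  · exact absurd rfl hne

noncomputable def coord (h : M₀.IsTopCompl Minf) : X ≃L[ℂ] M₀ × M₀ :=
  (Submodule.prodEquivOfIsTopCompl M₀ Minf h).symm.trans
    ((ContinuousLinearEquiv.refl ℂ M₀).prodCongr U.symm)

section Coordinates

variable (h : M₀.IsTopCompl Minf)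

theorem coord_symm_apply (p : M₀ × M₀) : (coord U h).symm p = (p.1 : X) + U p.2 :=
  rfl

theorem coord_add (v w : M₀) : coord U h ((v : X) + U w) = (v, w) :=
  (coord U h).apply_symm_apply (v, w)

theorem coord_add_smul (ω : ℂ) (v : M₀) : coord U h ((v : X) + ω • (U v : X)) = (v, ω • v) := by
  simpa only [map_smul, Submodule.coe_smul] using coord_add U h v (ω • v)

theorem mem_Minf_iff {x : X} : x ∈ Minf ↔ (coord U h x).1 = 0 := by
  simp [coord]

theorem mem_Momega_iff {ω : ℂ} {x : X} :
    x ∈ Momega M₀ Minf U ω ↔ (coord U h x).2 = ω • (coord U h x).1 := by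
  rw [mem_Momega]
  constructor
  · rintro ⟨v, rfl⟩
    simp [coord_add_smul]
  · intro hx
    refine ⟨(coord U h x).1, ?_⟩
    conv_rhs => rw [← (coord U h).symm_apply_apply x, coord_symm_apply, hx]
    simp

end Coordinates

theorem isClosed_Momega (h : M₀.IsTopCompl Minf) (ω : ℂ) :
    IsClosed (Momega M₀ Minf U ω : Set X) := by
  have : (Momega M₀ Minf U ω : Set X) = {x | (coord U h x).2 = ω • (coord U h x).1} :=
    Set.ext fun _ ↦ mem_Momega_iff U h
  rw [this]
  exact isClosed_eq (by fun_prop) (by fun_prop)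

theorem Momega_injective (h : M₀.IsTopCompl Minf) (h0 : M₀ ≠ ⊥) :
    Function.Injective (Momega M₀ Minf U) := by
  intro ω ω' hωω'
  have := Submodule.nontrivial_iff_ne_bot.2 h0
  obtain ⟨v, hv0⟩ := exists_ne (0 : M₀)
  have hv := add_smul_mem_Momega U ω v
  rw [hωω', mem_Momega_iff U h, coord_add_smul] at hv
  exact smul_left_injective ℂ hv0 hv

theorem exists_apply_eq_of_mem_algOf (h : M₀.IsTopCompl Minf) {A : X →L[ℂ] X}
    (hA : A ∈ algOf (lattice U)) (v : M₀) : ∃ w : M₀, A v = w ∧ A (U v) = U w := by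
  obtain ⟨w, hw⟩ : ∃ w : M₀, A v = w := ⟨⟨_, hA M₀ (by simp) _ v.2⟩, rfl⟩
  obtain ⟨u, hu⟩ : ∃ u : Minf, A (U v) = u := ⟨⟨_, hA Minf (by simp) _ (U v).2⟩, rfl⟩
  have h1 := hA _ (by simp) _ (add_smul_mem_Momega U 1 v)
  rw [map_add, map_smul, hw, hu, one_smul, mem_Momega_iff U h, ← U.apply_symm_apply u,
    coord_add, one_smul] at h1
  exact ⟨w, hw, by rw [hu, ← show U.symm u = w from h1, U.apply_symm_apply]⟩

theorem Momega_mem_latOf (h : M₀.IsTopCompl Minf) (ω : ℂ) :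
    Momega M₀ Minf U ω ∈ latOf (algOf (lattice U)) := by
  refine ⟨isClosed_Momega U h ω, fun A hA x hx ↦ ?_⟩
  obtain ⟨v, rfl⟩ := (mem_Momega _ _ _ _ _).1 hx
  obtain ⟨w, hv, hUv⟩ := exists_apply_eq_of_mem_algOf U h hA v
  rw [map_add, map_smul, hv, hUv]
  exact add_smul_mem_Momega U ω w

noncomputable def diagOp (h : M₀.IsTopCompl Minf) (B : M₀ →L[ℂ] M₀) : X →L[ℂ] X :=
  ((coord U h).symm : M₀ × M₀ →L[ℂ] X) ∘L B.prodMap B ∘L (coord U h : X →L[ℂ] M₀ × M₀)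

section DiagonalOperators

variable (h : M₀.IsTopCompl Minf)

theorem coord_diagOp (B : M₀ →L[ℂ] M₀) (x : X) :
    coord U h (diagOp U h B x) = (B (coord U h x).1, B (coord U h x).2) := by
  simp [diagOp, Prod.map]

theorem diagOp_mem_Momega (B : M₀ →L[ℂ] M₀) {ω : ℂ} {x : X} (hx : x ∈ Momega M₀ Minf U ω) :
    diagOp U h B x ∈ Momega M₀ Minf U ω := by
  rw [mem_Momega_iff U h] at hx ⊢
  rw [coord_diagOp, hx, map_smul]

theorem diagOp_mem_algOf (B : M₀ →L[ℂ] M₀) : diagOp U h B ∈ algOf (lattice U) := by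
  rintro M (rfl | rfl | rfl | rfl | rfl) x hx
  · rw [(Submodule.mem_bot ℂ).1 hx, map_zero]
    exact Submodule.zero_mem _
  · rw [← Momega_zero U] at hx
    simpa [Momega_zero] using diagOp_mem_Momega U h B hx
  · exact diagOp_mem_Momega U h B hx
  · rw [mem_Minf_iff U h] at hx ⊢
    rw [coord_diagOp, hx, map_zero]
  · exact Submodule.mem_top

variable {N : Submodule ℂ X}

theorem mem_of_coord_eq (hN : ∀ B : M₀ →L[ℂ] M₀, ∀ x ∈ N, diagOp U h B x ∈ N) {x y : X}
    (hx : x ∈ N) (B : M₀ →L[ℂ] M₀)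
    (hB : (B (coord U h x).1, B (coord U h x).2) = coord U h y) : y ∈ N := by
  rw [← coord_diagOp, (coord U h).injective.eq_iff] at hB
  exact hB ▸ hN B x hx

theorem eq_top_of_linearIndependent (hN : ∀ B : M₀ →L[ℂ] M₀, ∀ x ∈ N, diagOp U h B x ∈ N)
    {x : X} (hx : x ∈ N) (hli : LinearIndependent ℂ ![(coord U h x).1, (coord U h x).2]) :
    N = ⊤ := by
  refine eq_top_iff.2 fun y _ ↦ ?_
  obtain ⟨B, hB⟩ := ContinuousLinearMap.exists_apply_eq_of_linearIndependent hli
    ![(coord U h y).1, (coord U h y).2]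
  exact mem_of_coord_eq U h hN hx B (Prod.ext (hB 0) (hB 1))

theorem exists_mem_lines_of_mem (hN : ∀ B : M₀ →L[ℂ] M₀, ∀ x ∈ N, diagOp U h B x ∈ N)
    (hNtop : N ≠ ⊤) {x : X} (hx : x ∈ N) (hx0 : x ≠ 0) : ∃ K ∈ lines U, x ∈ K ∧ K ≤ N := by
  set a := (coord U h x).1
  set b := (coord U h x).2
  have hdep : ¬ LinearIndependent ℂ ![a, b] := fun hli ↦
    hNtop (eq_top_of_linearIndependent U h hN hx hli)
  by_cases ha : a = 0
  · have hb : b ≠ 0 := fun hb ↦ hx0 ((coord U h).map_eq_zero_iff.1 (Prod.ext ha hb))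
    refine ⟨Minf, Or.inr rfl, (mem_Minf_iff U h).2 ha, fun y hy ↦ ?_⟩
    obtain ⟨B, hB⟩ := ContinuousLinearMap.exists_apply_eq_of_ne_zero (R := ℂ) hb (coord U h y).2
    exact mem_of_coord_eq U h hN hx B
      (Prod.ext (show B a = _ by rw [ha, map_zero, (mem_Minf_iff U h).1 hy]) hB)
  · obtain ⟨ω, hω⟩ : ∃ ω : ℂ, ω • a = b := by simpa [LinearIndependent.pair_iff' ha] using hdep
    refine ⟨Momega M₀ Minf U ω, Or.inl ⟨ω, rfl⟩, (mem_Momega_iff U h).2 hω.symm,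
      fun y hy ↦ ?_⟩
    obtain ⟨B, hB⟩ := ContinuousLinearMap.exists_apply_eq_of_ne_zero (R := ℂ) ha (coord U h y).1
    exact mem_of_coord_eq U h hN hx B
      (Prod.ext hB (show B b = _ by rw [← hω, map_smul, hB, (mem_Momega_iff U h).1 hy]))

theorem mem_of_forall_diagOp_mem (hN : ∀ B : M₀ →L[ℂ] M₀, ∀ x ∈ N, diagOp U h B x ∈ N) :
    N ∈ lines U ∪ {⊥, ⊤} := by
  by_cases hNtop : N = ⊤
  · simp [hNtop]
  by_cases hNbot : N = ⊥
  · simp [hNbot]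
  obtain ⟨x, hx, hx0⟩ := N.ne_bot_iff.1 hNbot
  obtain ⟨K, hK, -, hKN⟩ := exists_mem_lines_of_mem U h hN hNtop hx hx0
  suffices N ≤ K from Or.inl (le_antisymm this hKN ▸ hK)
  intro y hy
  by_cases hy0 : y = 0
  · exact hy0 ▸ K.zero_mem
  obtain ⟨K', hK', hyK', hK'N⟩ := exists_mem_lines_of_mem U h hN hNtop hy hy0
  obtain rfl : K = K' := by
    by_contra hne
    exact hNtop <| top_unique <|
      sup_eq_top_of_ne U h.isCompl.sup_eq_top hK hK' hne ▸ sup_le hKN hK'N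
  exact hyK'

end DiagonalOperators

theorem latOf_algOf_lattice (h : M₀.IsTopCompl Minf) :
    latOf (algOf (lattice U)) = lines U ∪ {⊥, ⊤} := by
  refine Set.Subset.antisymm (fun N hN ↦ mem_of_forall_diagOp_mem U h fun B ↦
    hN.2 _ (diagOp_mem_algOf U h B)) ?_
  have hclosed : ∀ M ∈ lattice U, IsClosed (M : Set X) := by
    rintro M (rfl | rfl | rfl | rfl | rfl)
    exacts [Submodule.closed_of_finiteDimensional ⊥, h.isClosed, isClosed_Momega U h 1,
      h.isClosed', isClosed_univ]
  rintro N ((⟨ω, rfl⟩ | rfl) | rfl | rfl)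
  · exact Momega_mem_latOf U h ω
  all_goals exact subset_latOf_algOf hclosed (by simp)

theorem latOf_algOf_lattice_ne (h : M₀.IsTopCompl Minf) (h0 : M₀ ≠ ⊥) :
    latOf (algOf (lattice U)) ≠ lattice U := by
  intro heq
  refine Set.infinite_range_of_injective (Momega_injective U h h0) (Set.Finite.subset ?_
    (Set.range_subset_iff.2 (Momega_mem_latOf U h)))
  rw [heq]
  exact Set.toFinite _

end DoubleTriangle

theorem exists_Momega_one_eq {Y : Type*} [NormedAddCommGroup Y] [NormedSpace ℂ Y]
    [FiniteDimensional ℂ Y] {K L M : Submodule ℂ Y} (hKL : IsCompl K L) (hKM : IsCompl K M)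
    (hLM : IsCompl L M) : ∃ U : K ≃L[ℂ] M, Momega K M U 1 = L := by
  obtain ⟨U, hU⟩ := Submodule.exists_linearEquiv_range_eq hKL hKM hLM
  exact ⟨U.toContinuousLinearEquiv, by simpa [Momega] using hU⟩

theorem doubleTriangle_not_reflexive_general
    {X : Type*} [NormedAddCommGroup X] [NormedSpace ℂ X] [CompleteSpace X]
    (M₀ Minf : Submodule ℂ X)
    (hM₀c : IsClosed (M₀ : Set X)) (hMinfc : IsClosed (Minf : Set X))
    (hmeet : M₀ ⊓ Minf = ⊥) (hsum : M₀ ⊔ Minf = ⊤)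
    (h0 : M₀ ≠ ⊥)
    (U : M₀ ≃L[ℂ] Minf) :
    latOf (algOf ({⊥, M₀, Momega M₀ Minf U 1, Minf, ⊤} : Set (Submodule ℂ X))) =
      ({N | ∃ ω : ℂ, N = Momega M₀ Minf U ω} ∪ {Minf} ∪ {⊥, ⊤}) ∧
    latOf (algOf ({⊥, M₀, Momega M₀ Minf U 1, Minf, ⊤} : Set (Submodule ℂ X))) ≠
      ({⊥, M₀, Momega M₀ Minf U 1, Minf, ⊤} : Set (Submodule ℂ X)) ∧
    (∀ (Y : Type) (_ : NormedAddCommGroup Y) (_ : NormedSpace ℂ Y),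
      FiniteDimensional ℂ Y →
      ∀ K L M : Submodule ℂ Y,
        K ≠ ⊥ → L ≠ ⊥ → M ≠ ⊥ → K ≠ L → L ≠ M → K ≠ M →
        K ⊓ L = ⊥ → K ⊓ M = ⊥ → L ⊓ M = ⊥ →
        K ⊔ L = ⊤ → K ⊔ M = ⊤ → L ⊔ M = ⊤ →
        latOf (algOf ({⊥, K, L, M, ⊤} : Set (Submodule ℂ Y))) ≠
          ({⊥, K, L, M, ⊤} : Set (Submodule ℂ Y))) := by
  have h : M₀.IsTopCompl Minf := Submodule.IsCompl.isTopCompl_of_isClosed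
    ⟨disjoint_iff.2 hmeet, codisjoint_iff.2 hsum⟩ hM₀c hMinfc
  refine ⟨DoubleTriangle.latOf_algOf_lattice U h, DoubleTriangle.latOf_algOf_lattice_ne U h h0, ?_⟩
  intro Y _ _ _ K L M hK _ _ _ _ _ hKLm hKMm hLMm hKLs hKMs hLMs
  have hKM : IsCompl K M := ⟨disjoint_iff.2 hKMm, codisjoint_iff.2 hKMs⟩
  obtain ⟨V, rfl⟩ := exists_Momega_one_eq ⟨disjoint_iff.2 hKLm, codisjoint_iff.2 hKLs⟩ hKM
    ⟨disjoint_iff.2 hLMm, codisjoint_iff.2 hLMs⟩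
  exact DoubleTriangle.latOf_algOf_lattice_ne V
    (Submodule.IsCompl.isTopCompl_of_isClosed_of_finiteDimensional hKM
      K.closed_of_finiteDimensional) hK

/-- The invariant subspace lattice of a double triangle subspace lattice 𝔗_U is
{M_ω : ω ∈ ℂ} ∪ {M_∞} ∪ {0, X}; in particular 𝔗_U is not reflexive, and hence no double
triangle subspace lattice in a finite-dimensional Banach space is reflexive. -/
theorem doubleTriangle_not_reflexive
    {X : Type*} [NormedAddCommGroup X] [NormedSpace ℂ X] [CompleteSpace X]
    (M₀ Minf : Submodule ℂ X)
    (hM₀c : IsClosed (M₀ : Set X)) (hMinfc : IsClosed (Minf : Set X))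
    (hmeet : M₀ ⊓ Minf = ⊥) (hsum : M₀ ⊔ Minf = ⊤)
    (h0 : M₀ ≠ ⊥) (hinf : Minf ≠ ⊥)
    (U : M₀ ≃L[ℂ] Minf) :
    latOf (algOf ({⊥, M₀, Momega M₀ Minf U 1, Minf, ⊤} : Set (Submodule ℂ X))) =
      ({N | ∃ ω : ℂ, N = Momega M₀ Minf U ω} ∪ {Minf} ∪ {⊥, ⊤}) ∧
    latOf (algOf ({⊥, M₀, Momega M₀ Minf U 1, Minf, ⊤} : Set (Submodule ℂ X))) ≠
      ({⊥, M₀, Momega M₀ Minf U 1, Minf, ⊤} : Set (Submodule ℂ X)) ∧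
    (∀ (Y : Type) (_ : NormedAddCommGroup Y) (_ : NormedSpace ℂ Y),
      FiniteDimensional ℂ Y →
      ∀ K L M : Submodule ℂ Y,
        K ≠ ⊥ → L ≠ ⊥ → M ≠ ⊥ → K ≠ L → L ≠ M → K ≠ M →
        K ⊓ L = ⊥ → K ⊓ M = ⊥ → L ⊓ M = ⊥ →
        K ⊔ L = ⊤ → K ⊔ M = ⊤ → L ⊔ M = ⊤ →
        latOf (algOf ({⊥, K, L, M, ⊤} : Set (Submodule ℂ Y))) ≠
          ({⊥, K, L, M, ⊤} : Set (Submodule ℂ Y))) :=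
  doubleTriangle_not_reflexive_general M₀ Minf hM₀c hMinfc hmeet hsum h0 U
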